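/- arXiv:2110.09602 — 2 statements merged into one kernel-verified Lean document; each statement's English description precedes it below -/
import Mathlib

section
/- Fix a finite obstacle set O ⊂ ℝ × ℝ (interpreted as points (t_i, x_i)). The set of 1-Lipschitz functions x: [0,T] → ℝ avoiding all obstacles (i.e., x(t_i) ≠ x_i for all i) that lie in a fixed connected component of this set (with the uniform topology) is a convex subset of the space of continuous functions. -/
/-- The set of 1-Lipschitz functions on `[0, T]` avoiding a finite obstacle set `O`
(i.e. `x tᵢ ≠ xᵢ` for each obstacle `(tᵢ, xᵢ)`), inside `C([0,T], ℝ)` with the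
sup-norm topology. -/
def LipAvoiding (T : ℝ) (O : Finset (ℝ × ℝ)) : Set C(Set.Icc (0 : ℝ) T, ℝ) :=
  {x | LipschitzWith 1 x ∧ ∀ o ∈ O, ∀ h : o.1 ∈ Set.Icc (0 : ℝ) T, x ⟨o.1, h⟩ ≠ o.2}

/-- Any connected component of the set of 1-Lipschitz obstacle-avoiding functions on
`[0, T]` (with the uniform topology) is a convex subset of `C([0,T], ℝ)`. -/
theorem connectedComponentIn_lipAvoiding_convex (T : ℝ) (O : Finset (ℝ × ℝ))
    (x : C(Set.Icc (0 : ℝ) T, ℝ)) (hx : x ∈ LipAvoiding T O) :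
    Convex ℝ (connectedComponentIn (LipAvoiding T O) x) := by
  classical
  set F := LipAvoiding T O with hF
  set S : Set C(Set.Icc (0:ℝ) T, ℝ) :=
    {y | LipschitzWith 1 y ∧ ∀ o ∈ O, ∀ h : o.1 ∈ Set.Icc (0:ℝ) T,
      0 < (y ⟨o.1, h⟩ - o.2) * (x ⟨o.1, h⟩ - o.2)} with hS
  have hSsub : S ⊆ F := by
    rintro y ⟨hy1, hy2⟩
    refine ⟨hy1, fun o ho h => ?_⟩
    intro hey
    have := hy2 o ho h
    rw [hey, sub_self, zero_mul] at this
    exact lt_irrefl _ this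
  have hxS : x ∈ S := by
    refine ⟨hx.1, fun o ho h => ?_⟩
    exact mul_self_pos.2 (sub_ne_zero.2 (hx.2 o ho h))
  have hconv : Convex ℝ S := by
    rintro y ⟨hy1, hy2⟩ z ⟨hz1, hz2⟩ a b ha hb hab
    constructor
    · apply LipschitzWith.of_dist_le_mul
      intro s t
      have h1 := hy1.dist_le_mul s t
      have h2 := hz1.dist_le_mul s t
      rw [Real.dist_eq] at h1 h2 ⊢
      push_cast at h1 h2
      simp only [ContinuousMap.add_apply, ContinuousMap.smul_apply, smul_eq_mul]
      calc |a * y s + b * z s - (a * y t + b * z t)|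
          = |a * (y s - y t) + b * (z s - z t)| := by congr 1; ring
        _ ≤ |a * (y s - y t)| + |b * (z s - z t)| := abs_add_le _ _
        _ = a * |y s - y t| + b * |z s - z t| := by
            rw [abs_mul, abs_mul, abs_of_nonneg ha, abs_of_nonneg hb]
        _ ≤ a * (1 * dist s t) + b * (1 * dist s t) := by gcongr
        _ = (a + b) * dist s t := by ring
        _ = 1 * dist s t := by rw [hab]
    · intro o ho h
      have p1 := hy2 o ho h
      have p2 := hz2 o ho h
      simp only [ContinuousMap.add_apply, ContinuousMap.smul_apply, smul_eq_mul]
      have key : (a * y ⟨o.1, h⟩ + b * z ⟨o.1, h⟩ - o.2) * (x ⟨o.1, h⟩ - o.2)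
          = a * ((y ⟨o.1, h⟩ - o.2) * (x ⟨o.1, h⟩ - o.2))
            + b * ((z ⟨o.1, h⟩ - o.2) * (x ⟨o.1, h⟩ - o.2)) := by
        linear_combination (x ⟨o.1, h⟩ - o.2) * o.2 * hab
      rw [key]
      rcases ha.lt_or_eq with ha' | ha'
      · exact add_pos_of_pos_of_nonneg (mul_pos ha' p1) (mul_nonneg hb p2.le)
      · have hb1 : b = 1 := by linarith
        rw [← ha', hb1]; simpa using p2
  have hpre : ((Subtype.val : F → C(Set.Icc (0:ℝ) T, ℝ)) ⁻¹' S : Set F) =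
      ⋂ o ∈ O, {y : F | ∀ h : o.1 ∈ Set.Icc (0:ℝ) T,
        0 < ((y : C(Set.Icc (0:ℝ) T, ℝ)) ⟨o.1, h⟩ - o.2) * (x ⟨o.1, h⟩ - o.2)} := by
    ext y
    simp only [Set.mem_preimage, Set.mem_iInter, Set.mem_setOf_eq, hS]
    exact ⟨fun hy => hy.2, fun hy => ⟨y.2.1, hy⟩⟩
  have hA : ∀ o ∈ O, IsClopen {y : F | ∀ h : o.1 ∈ Set.Icc (0:ℝ) T,
      0 < ((y : C(Set.Icc (0:ℝ) T, ℝ)) ⟨o.1, h⟩ - o.2) * (x ⟨o.1, h⟩ - o.2)} := by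
    intro o ho
    by_cases h : o.1 ∈ Set.Icc (0:ℝ) T
    · have hev : Continuous fun y : F => ((y : C(Set.Icc (0:ℝ) T, ℝ)) ⟨o.1, h⟩ : ℝ) :=
        (continuous_eval_const _).comp continuous_subtype_val
      have hc : Continuous fun y : F =>
          (((y : C(Set.Icc (0:ℝ) T, ℝ)) ⟨o.1, h⟩ : ℝ) - o.2) * (x ⟨o.1, h⟩ - o.2) :=
        (hev.sub continuous_const).mul continuous_const
      have heq : {y : F | ∀ h' : o.1 ∈ Set.Icc (0:ℝ) T,
            0 < ((y : C(Set.Icc (0:ℝ) T, ℝ)) ⟨o.1, h'⟩ - o.2) * (x ⟨o.1, h'⟩ - o.2)}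
          = {y : F | 0 < ((y : C(Set.Icc (0:ℝ) T, ℝ)) ⟨o.1, h⟩ - o.2) * (x ⟨o.1, h⟩ - o.2)} := by
        ext y; exact ⟨fun hy => hy h, fun hy h' => hy⟩
      rw [heq]
      have hne : ∀ y : F, ((y : C(Set.Icc (0:ℝ) T, ℝ)) ⟨o.1, h⟩ - o.2) * (x ⟨o.1, h⟩ - o.2) ≠ 0 :=
        fun y => mul_ne_zero (sub_ne_zero.2 (y.2.2 o ho h)) (sub_ne_zero.2 (hx.2 o ho h))
      refine ⟨?_, isOpen_lt continuous_const hc⟩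
      rw [← isOpen_compl_iff]
      have hcompl : {y : F | 0 < ((y : C(Set.Icc (0:ℝ) T, ℝ)) ⟨o.1, h⟩ - o.2) * (x ⟨o.1, h⟩ - o.2)}ᶜ
          = {y : F | ((y : C(Set.Icc (0:ℝ) T, ℝ)) ⟨o.1, h⟩ - o.2) * (x ⟨o.1, h⟩ - o.2) < 0} := by
        ext y
        simp only [Set.mem_compl_iff, Set.mem_setOf_eq, not_lt]
        exact ⟨fun hy => lt_of_le_of_ne hy (hne y), le_of_lt⟩
      rw [hcompl]
      exact isOpen_lt hc continuous_const
    · have huniv : {y : F | ∀ h' : o.1 ∈ Set.Icc (0:ℝ) T,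
            0 < ((y : C(Set.Icc (0:ℝ) T, ℝ)) ⟨o.1, h'⟩ - o.2) * (x ⟨o.1, h'⟩ - o.2)}
          = Set.univ := by
        ext y; simp [h]
      rw [huniv]; exact isClopen_univ
  have hclopen : IsClopen ((Subtype.val : F → C(Set.Icc (0:ℝ) T, ℝ)) ⁻¹' S) := by
    rw [hpre]; exact isClopen_biInter_finset hA
  have h1 : connectedComponentIn F x ⊆ S := by
    rw [connectedComponentIn_eq_image hx]
    rintro y ⟨z, hz, rfl⟩
    exact hclopen.connectedComponent_subset (hxS : (⟨x, hx⟩ : F) ∈ _) hz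
  have h2 : S ⊆ connectedComponentIn F x :=
    hconv.isPreconnected.subset_connectedComponentIn hxS hSsub
  rw [Set.Subset.antisymm h1 h2]
  exact hconv
end

section
/- Each connected component of the space of strict 1-Lipschitz functions avoiding a finite set of obstacles is contractible. -/
/-- The set of strict 1-Lipschitz functions on `[0, T]` avoiding a finite obstacle set `O`,
inside `C([0,T], ℝ)` with the sup-norm topology. -/
def StrictLipAvoiding (T : ℝ) (O : Finset (ℝ × ℝ)) : Set C(Set.Icc (0 : ℝ) T, ℝ) :=
  {x | (∀ s t : Set.Icc (0 : ℝ) T, s ≠ t → |x s - x t| < |(s : ℝ) - t|) ∧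
    ∀ o ∈ O, ∀ h : o.1 ∈ Set.Icc (0 : ℝ) T, x ⟨o.1, h⟩ ≠ o.2}

/-- Each connected component of the space of strict 1-Lipschitz functions avoiding a
finite set of obstacles is contractible. -/
theorem connectedComponentIn_strictLipAvoiding_contractible (T : ℝ) (O : Finset (ℝ × ℝ))
    (x : C(Set.Icc (0 : ℝ) T, ℝ)) (hx : x ∈ StrictLipAvoiding T O) :
    ContractibleSpace (connectedComponentIn (StrictLipAvoiding T O) x) := by
  classical
  set F := StrictLipAvoiding T O with hF
  set S : Set C(Set.Icc (0 : ℝ) T, ℝ) :=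
    {y | y ∈ F ∧ ∀ o ∈ O, ∀ h : o.1 ∈ Set.Icc (0 : ℝ) T,
      0 < (y ⟨o.1, h⟩ - o.2) * (x ⟨o.1, h⟩ - o.2)} with hS
  have hxS : x ∈ S := by
    refine ⟨hx, fun o ho h => ?_⟩
    exact mul_self_pos.mpr (sub_ne_zero.mpr (hx.2 o ho h))
  have hconv : Convex ℝ S := by
    intro y hy z hz a b ha hb hab
    have key : ∀ o ∈ O, ∀ h : o.1 ∈ Set.Icc (0 : ℝ) T,
        0 < ((a • y + b • z) ⟨o.1, h⟩ - o.2) * (x ⟨o.1, h⟩ - o.2) := by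
      intro o ho h
      have hu := hy.2 o ho h
      have hv := hz.2 o ho h
      simp only [ContinuousMap.add_apply, ContinuousMap.smul_apply, smul_eq_mul]
      have hb1 : b = 1 - a := by linarith
      subst hb1
      rcases ha.eq_or_lt with rfl | ha'
      · simpa using hv
      · nlinarith [mul_pos ha' hu, mul_nonneg (by linarith : (0:ℝ) ≤ 1 - a) hv.le]
    refine ⟨⟨?_, ?_⟩, key⟩
    · intro s t hst
      have h1 := hy.1.1 s t hst
      have h2 := hz.1.1 s t hst
      simp only [ContinuousMap.add_apply, ContinuousMap.smul_apply, smul_eq_mul]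
      have habs : |a * y s + b * z s - (a * y t + b * z t)|
          ≤ a * |y s - y t| + b * |z s - z t| := by
        have : a * y s + b * z s - (a * y t + b * z t)
            = a * (y s - y t) + b * (z s - z t) := by ring
        rw [this]
        calc |a * (y s - y t) + b * (z s - z t)|
            ≤ |a * (y s - y t)| + |b * (z s - z t)| := abs_add_le _ _
          _ = a * |y s - y t| + b * |z s - z t| := by
              rw [abs_mul, abs_mul, abs_of_nonneg ha, abs_of_nonneg hb]
      have hsum : a * |(s : ℝ) - t| + b * |(s : ℝ) - t| = |(s : ℝ) - t| := by
        rw [← add_mul, hab, one_mul]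
      rcases ha.eq_or_lt with rfl | ha'
      · have hb1 : b = 1 := by linarith
        nlinarith [abs_nonneg (y s - y t)]
      · nlinarith [mul_lt_mul_of_pos_left h1 ha', mul_le_mul_of_nonneg_left h2.le hb]
    · intro o ho h
      have := key o ho h
      intro hcon
      rw [hcon] at this
      simp at this
  have hSF : S ⊆ F := fun y hy => hy.1
  have h1 : S ⊆ connectedComponentIn F x :=
    hconv.isPreconnected.subset_connectedComponentIn hxS hSF
  have h2 : connectedComponentIn F x ⊆ S := by
    intro y hy
    have hyF : y ∈ F := connectedComponentIn_subset F x hy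
    refine ⟨hyF, fun o ho h => ?_⟩
    set C := connectedComponentIn F x with hC
    have hCpre : IsPreconnected C := isPreconnected_connectedComponentIn
    set f : C(Set.Icc (0 : ℝ) T, ℝ) → ℝ :=
      fun z => (z ⟨o.1, h⟩ - o.2) * (x ⟨o.1, h⟩ - o.2) with hf
    have hfc : Continuous f := by
      apply Continuous.mul
      · exact (continuous_eval_const _).sub continuous_const
      · exact continuous_const
    have himg : IsPreconnected (f '' C) := hCpre.image f hfc.continuousOn
    have hxC : x ∈ C := mem_connectedComponentIn hx
    have hfx : 0 < f x := mul_self_pos.mpr (sub_ne_zero.mpr (hx.2 o ho h))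
    by_contra hcon
    push_neg at hcon
    have hfy : f y ≠ 0 :=
      mul_ne_zero (sub_ne_zero.mpr (hyF.2 o ho h)) (sub_ne_zero.mpr (hx.2 o ho h))
    have hfylt : f y < 0 := lt_of_le_of_ne hcon hfy
    have hord := himg.ordConnected
    have h0 : (0 : ℝ) ∈ f '' C :=
      hord.out ⟨y, hy, rfl⟩ ⟨x, hxC, rfl⟩ ⟨hfylt.le, hfx.le⟩
    obtain ⟨z, hzC, hz0⟩ := h0
    have hzF : z ∈ F := connectedComponentIn_subset F x hzC
    exact mul_ne_zero (sub_ne_zero.mpr (hzF.2 o ho h))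
      (sub_ne_zero.mpr (hx.2 o ho h)) hz0
  have hEq : connectedComponentIn F x = S := le_antisymm h2 h1
  rw [hEq]
  exact hconv.contractibleSpace ⟨x, hxS⟩
end
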